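/- arXiv:1505.02371 — 11 statements merged into one kernel-verified Lean document; each statement's English description precedes it below -/
import Mathlib

section
/- If φ and ψ are autarkies for a clause-set F, then there is an autarky θ for F such that φ * (ψ * F) = ψ * (φ * F) = θ * F, and the set of clauses of F satisfied by θ is exactly the set of clauses satisfied by φ or by ψ. Concretely, the composition θ defined by θ(v) = φ(v) for v ∈ var(φ) and θ(v) = ψ(v) for v ∈ var(ψ) \ var(φ) is such an autarky. -/
open scoped Classical

abbrev Var := ℕ
abbrev Lit := Var × Bool
abbrev Clause := Finset Lit
abbrev ClauseSet := Finset Clause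
abbrev PAssign := Var → Option Bool

def Lit.neg (x : Lit) : Lit := (x.1, !x.2)

def clauseVars (C : Clause) : Finset Var := C.image Prod.fst

def csVars (F : ClauseSet) : Finset Var := F.biUnion clauseVars

def paVars (φ : PAssign) : Set Var := {v | φ v ≠ none}

def litTrue (φ : PAssign) (x : Lit) : Prop := φ x.1 = some x.2

def litFalse (φ : PAssign) (x : Lit) : Prop := φ x.1 = some (!x.2)

def satClause (φ : PAssign) (C : Clause) : Prop := ∃ x ∈ C, litTrue φ x

def touches (φ : PAssign) (C : Clause) : Prop := ∃ x ∈ C, φ x.1 ≠ none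

def isAutarky (φ : PAssign) (F : ClauseSet) : Prop := ∀ C ∈ F, touches φ C → satClause φ C

noncomputable def applyPA (φ : PAssign) (F : ClauseSet) : ClauseSet :=
  (F.filter fun C => ¬ satClause φ C).image fun C => C.filter fun x => ¬ litFalse φ x

def satCS (F : ClauseSet) : Prop := ∃ φ : PAssign, applyPA φ F = ∅

theorem autarky_composition (φ ψ : PAssign) (F : ClauseSet)
    (hφ : isAutarky φ F) (hψ : isAutarky ψ F) :
    isAutarky (fun v => (φ v).or (ψ v)) F ∧
    applyPA φ (applyPA ψ F) = applyPA (fun v => (φ v).or (ψ v)) F ∧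
    applyPA ψ (applyPA φ F) = applyPA (fun v => (φ v).or (ψ v)) F ∧
    ∀ C ∈ F, (satClause (fun v => (φ v).or (ψ v)) C ↔ satClause φ C ∨ satClause ψ C) := by
  set θ : PAssign := fun v => (φ v).or (ψ v) with hθdef
  have thetaTrue : ∀ x : Lit, litTrue θ x ↔ (litTrue φ x ∨ (φ x.1 = none ∧ litTrue ψ x)) := by
    intro x
    simp only [litTrue, hθdef]
    cases h : φ x.1 with
    | none => simp [h]
    | some b => simp [h]
  have key : ∀ C ∈ F, (satClause θ C ↔ satClause φ C ∨ satClause ψ C) := by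
    intro C hC
    constructor
    · rintro ⟨x, hx, ht⟩
      rcases (thetaTrue x).1 ht with h | ⟨_, h⟩
      · exact Or.inl ⟨x, hx, h⟩
      · exact Or.inr ⟨x, hx, h⟩
    · rintro (⟨x, hx, h⟩ | ⟨x, hx, h⟩)
      · exact ⟨x, hx, (thetaTrue x).2 (Or.inl h)⟩
      · cases hc : φ x.1 with
        | none => exact ⟨x, hx, (thetaTrue x).2 (Or.inr ⟨hc, h⟩)⟩
        | some b =>
          obtain ⟨y, hy, hty⟩ := hφ C hC ⟨x, hx, by simp [hc]⟩
          exact ⟨y, hy, (thetaTrue y).2 (Or.inl hty)⟩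
  have aut : isAutarky θ F := by
    intro C hC ht
    obtain ⟨x, hx, hne⟩ := ht
    have hor : φ x.1 ≠ none ∨ ψ x.1 ≠ none := by
      by_contra h
      push_neg at h
      exact hne (by simp [hθdef, h.1, h.2])
    rcases hor with h | h
    · exact (key C hC).2 (Or.inl (hφ C hC ⟨x, hx, h⟩))
    · exact (key C hC).2 (Or.inr (hψ C hC ⟨x, hx, h⟩))
  have falseIff : ∀ C ∈ F, ¬ satClause φ C →
      ∀ x ∈ C, (litFalse θ x ↔ litFalse φ x ∨ litFalse ψ x) := by
    intro C hC hns x hx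
    constructor
    · intro h
      simp only [litFalse, hθdef] at h
      cases hc : φ x.1 with
      | none => right; rw [hc] at h; simpa [litFalse] using h
      | some b => left; rw [hc] at h; simp at h; simp [litFalse, hc, h]
    · rintro (h | h)
      · simp only [litFalse, hθdef]
        simp only [litFalse] at h
        simp [h]
      · cases hc : φ x.1 with
        | none =>
          simp only [litFalse, hθdef]
          simp only [litFalse] at h
          simp [hc, h]
        | some b =>
          by_cases hb : b = x.2
          · exact absurd ⟨x, hx, by simp [litTrue, hc, hb]⟩ hns
          · have hb' : b = !x.2 := by
              cases b <;> cases hx2 : x.2 <;> simp_all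
            simp only [litFalse, hθdef]
            simp [hc, hb']
  have comp : ∀ (α β : PAssign), isAutarky α F → isAutarky β F →
      applyPA α (applyPA β F) =
        (F.filter fun C => ¬ satClause α C ∧ ¬ satClause β C).image
          (fun C => C.filter fun x => ¬ (litFalse α x ∨ litFalse β x)) := by
    intro α β hα hβ
    have filt_eq : ∀ C : Clause, ¬ satClause β C →
        ((C.filter fun x => ¬ litFalse β x).filter fun x => ¬ litFalse α x)
          = C.filter fun x => ¬ (litFalse α x ∨ litFalse β x) := by
      intro C _
      rw [Finset.filter_filter]
      exact Finset.filter_congr (by intro x _; tauto)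
    ext D
    simp only [applyPA, Finset.mem_image, Finset.mem_filter]
    constructor
    · rintro ⟨C', ⟨⟨C, ⟨hCF, hCβ⟩, rfl⟩, hC'α⟩, rfl⟩
      refine ⟨C, ⟨hCF, ?_, hCβ⟩, (filt_eq C hCβ).symm⟩
      rintro ⟨x, hx, ht⟩
      refine hC'α ⟨x, Finset.mem_filter.2 ⟨hx, ?_⟩, ht⟩
      intro hf
      exact hCβ (hβ C hCF ⟨x, hx, by rw [hf]; simp⟩)
    · rintro ⟨C, ⟨hCF, hnα, hnβ⟩, rfl⟩
      refine ⟨C.filter fun x => ¬ litFalse β x, ⟨⟨C, ⟨hCF, hnβ⟩, rfl⟩, ?_⟩, filt_eq C hnβ⟩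
      rintro ⟨x, hx, ht⟩
      exact hnα ⟨x, (Finset.mem_filter.1 hx).1, ht⟩
  have main : applyPA θ F =
      (F.filter fun C => ¬ satClause φ C ∧ ¬ satClause ψ C).image
        (fun C => C.filter fun x => ¬ (litFalse φ x ∨ litFalse ψ x)) := by
    unfold applyPA
    rw [show (F.filter fun C => ¬ satClause θ C)
        = F.filter (fun C => ¬ satClause φ C ∧ ¬ satClause ψ C) from
      Finset.filter_congr (by intro C hC; rw [key C hC]; tauto)]
    apply Finset.image_congr
    intro C hC
    simp only [Finset.coe_filter, Set.mem_setOf_eq] at hC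
    exact Finset.filter_congr (by
      intro x hx
      rw [falseIff C hC.1 hC.2.1 x hx])
  refine ⟨aut, ?_, ?_, key⟩
  · rw [comp φ ψ hφ hψ, main]
  · rw [comp ψ φ hψ hφ, main]
    rw [show (F.filter fun C => ¬ satClause ψ C ∧ ¬ satClause φ C)
        = F.filter (fun C => ¬ satClause φ C ∧ ¬ satClause ψ C) from
      Finset.filter_congr (by intro C _; tauto)]
    apply Finset.image_congr
    intro C _
    exact Finset.filter_congr (by intro x _; tauto)
end

section
/- The set of lean clause-sets is closed under finite union: if F and G are both lean, then F ∪ G is lean. -/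
open scoped Classical

def isLean (F : ClauseSet) : Prop :=
  ∀ φ : PAssign, isAutarky φ F → paVars φ ⊆ ↑(csVars F) → ∀ v, φ v = none

theorem lean_union (F G : ClauseSet) (hF : isLean F) (hG : isLean G) :
    isLean (F ∪ G) := by
  intro φ haut hsub v
  have key : ∀ H : ClauseSet, isLean H → isAutarky φ (F ∪ G) → H ⊆ F ∪ G →
      ∀ v ∈ csVars H, φ v = none := by
    intro H hH ha hHsub w hw
    set ψ : PAssign := fun v => if v ∈ csVars H then φ v else none with hψ
    have hψaut : isAutarky ψ H := by
      intro C hC htouch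
      obtain ⟨x, hxC, hx⟩ := htouch
      have hxv : x.1 ∈ csVars H := by
        by_contra hcon
        simp [hψ, hcon] at hx
      have hφx : φ x.1 ≠ none := by simpa [hψ, hxv] using hx
      obtain ⟨y, hyC, hy⟩ := ha C (hHsub hC) ⟨x, hxC, hφx⟩
      refine ⟨y, hyC, ?_⟩
      have hyv : y.1 ∈ csVars H :=
        Finset.mem_biUnion.2 ⟨C, hC, Finset.mem_image.2 ⟨y, hyC, rfl⟩⟩
      simpa [litTrue, hψ, hyv] using hy
    have hψsub : paVars ψ ⊆ ↑(csVars H) := by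
      intro u hu
      by_contra hcon
      simp only [paVars, hψ, Set.mem_setOf_eq, ne_eq, ite_eq_right_iff, not_forall] at hu
      exact hcon (by exact_mod_cast hu.1)
    have := hH ψ hψaut hψsub w
    simpa [hψ, hw] using this
  by_cases hv : φ v = none
  · exact hv
  · have : v ∈ csVars (F ∪ G) := hsub hv
    obtain ⟨C, hC, hvC⟩ := Finset.mem_biUnion.1 this
    rcases Finset.mem_union.1 hC with h | h
    · exact key F hF haut Finset.subset_union_left v (Finset.mem_biUnion.2 ⟨C, h, hvC⟩)
    · have haut' : isAutarky φ (G ∪ F) := by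
        intro C hC; exact haut C (by rw [Finset.union_comm]; exact hC)
      exact key G hG (by rw [Finset.union_comm] at haut'; exact haut') Finset.subset_union_right v (Finset.mem_biUnion.2 ⟨C, h, hvC⟩)
end

section
/- Every clause-set F has a unique largest lean sub-clause-set, the lean kernel Na(F): Na(F) ⊆ F is lean, and every lean subset G ⊆ F satisfies G ⊆ Na(F). -/
open scoped Classical

noncomputable def leanKernel (F : ClauseSet) : ClauseSet :=
  (F.powerset.filter isLean).sup id

def varAut (F : ClauseSet) : Set Var :=
  {v | ∃ φ : PAssign, isAutarky φ F ∧ paVars φ ⊆ ↑(csVars F) ∧ φ v ≠ none}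

lemma restrict_none {A : ClauseSet} (hA : isLean A) (φ : PAssign)
    (haut : isAutarky φ A) : ∀ v ∈ csVars A, φ v = none := by
  intro v hv
  set φA : PAssign := fun w => if w ∈ csVars A then φ w else none with hφA
  have hsub : paVars φA ⊆ ↑(csVars A) := by
    intro w hw
    by_contra h
    have h' : w ∉ csVars A := by simpa using h
    simp only [paVars, Set.mem_setOf_eq, hφA] at hw
    exact hw (by simp [h'])
  have hautA : isAutarky φA A := by
    intro C hC ⟨x, hx, hne⟩
    have hxv : x.1 ∈ csVars A := by
      by_contra h
      simp [hφA, h] at hne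
    have hφx : φ x.1 ≠ none := by simpa [hφA, hxv] using hne
    obtain ⟨y, hy, hty⟩ := haut C hC ⟨x, hx, hφx⟩
    have hyv : y.1 ∈ csVars A :=
      Finset.mem_biUnion.mpr ⟨C, hC, Finset.mem_image.mpr ⟨y, hy, rfl⟩⟩
    exact ⟨y, hy, by simpa [litTrue, hφA, hyv] using hty⟩
  have := hA φA hautA hsub v
  simpa [hφA, hv] using this

lemma isLean_union {A B : ClauseSet} (hA : isLean A) (hB : isLean B) :
    isLean (A ⊔ B) := by
  intro φ haut hsub v
  have hautA : isAutarky φ A := fun C hC ht => haut C (Finset.mem_union_left _ hC) ht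
  have hautB : isAutarky φ B := fun C hC ht => haut C (Finset.mem_union_right _ hC) ht
  by_contra h
  have hv : v ∈ csVars (A ⊔ B) := hsub h
  have : v ∈ csVars A ∨ v ∈ csVars B := by
    rcases Finset.mem_biUnion.mp hv with ⟨C, hC, hvC⟩
    rcases Finset.mem_union.mp hC with hC | hC
    · exact Or.inl (Finset.mem_biUnion.mpr ⟨C, hC, hvC⟩)
    · exact Or.inr (Finset.mem_biUnion.mpr ⟨C, hC, hvC⟩)
  rcases this with hv | hv
  · exact h (restrict_none hA φ hautA v hv)
  · exact h (restrict_none hB φ hautB v hv)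

lemma isLean_empty : isLean (⊥ : ClauseSet) := by
  intro φ haut hsub v
  by_contra h
  have := hsub h
  simp [csVars] at this

theorem lean_kernel_exists_unique (F : ClauseSet) :
    ∃! N : ClauseSet, N ⊆ F ∧ isLean N ∧ ∀ G ⊆ F, isLean G → G ⊆ N := by
  refine ⟨leanKernel F, ⟨?_, ?_, ?_⟩, ?_⟩
  · intro C hC
    rcases Finset.mem_sup.mp hC with ⟨G, hG, hCG⟩
    rcases Finset.mem_filter.mp hG with ⟨hGp, _⟩
    exact Finset.mem_powerset.mp hGp hCG
  · exact Finset.sup_induction isLean_empty (fun a ha b hb => isLean_union ha hb)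
      (fun G hG => (Finset.mem_filter.mp hG).2)
  · intro G hGF hGlean
    exact Finset.le_sup (f := id)
      (Finset.mem_filter.mpr ⟨Finset.mem_powerset.mpr hGF, hGlean⟩)
  · rintro N ⟨hNF, hNlean, hNmax⟩
    refine Finset.Subset.antisymm ?_ ?_
    · exact Finset.le_sup (f := id)
        (Finset.mem_filter.mpr ⟨Finset.mem_powerset.mpr hNF, hNlean⟩)
    · intro C hC
      rcases Finset.mem_sup.mp hC with ⟨G, hG, hCG⟩
      rcases Finset.mem_filter.mp hG with ⟨hGp, hGl⟩
      exact hNmax G (Finset.mem_powerset.mp hGp) hGl hCG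
end

section
/- For any clause-set F, var(F) is the disjoint union of the largest autarky-var-set and the variables of the lean kernel: var_aut(F) ∪ var(Na(F)) = var(F) and var_aut(F) ∩ var(Na(F)) = ∅, where var_aut(F) := ⋃{var(φ) : φ autarky for F with var(φ) ⊆ var(F)}. -/
open scoped Classical

/-!
Autarkies compose: overlaying `ψ` on an autarky `Φ` (taking `Φ` where it is defined) gives an
autarky as soon as `ψ` is an autarky for the clauses `Φ` does not touch. Overlaying finitely many
autarkies yields an autarky `Φ` whose variables are exactly `var_aut(F)`. The clauses untouched
by `Φ` form a lean subset, since an autarky for them could be overlaid on `Φ`, and they contain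
every variable outside `var_aut(F)`, since otherwise `Φ` could be extended by any value at that
variable. Conversely, an autarky of `F` restricted to the variables of a lean subset is trivial,
so no autarky variable occurs in the lean kernel.
-/

lemma mem_csVars_of_mem {F : ClauseSet} {C : Clause} {x : Lit} (hC : C ∈ F) (hx : x ∈ C) :
    x.1 ∈ csVars F :=
  Finset.mem_biUnion.2 ⟨C, hC, Finset.mem_image_of_mem _ hx⟩

lemma csVars_mono {G F : ClauseSet} (h : G ⊆ F) : csVars G ⊆ csVars F :=
  Finset.biUnion_subset_biUnion_of_subset_left _ h

lemma touches_congr {φ ψ : PAssign} {C : Clause} (h : ∀ x ∈ C, φ x.1 = ψ x.1) :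
    touches φ C ↔ touches ψ C :=
  exists_congr fun x => and_congr_right fun hx => by rw [h x hx]

lemma satClause_congr {φ ψ : PAssign} {C : Clause} (h : ∀ x ∈ C, φ x.1 = ψ x.1) :
    satClause φ C ↔ satClause ψ C :=
  exists_congr fun x => and_congr_right fun hx => by rw [litTrue, litTrue, h x hx]

lemma isAutarky_congr {φ ψ : PAssign} {F : ClauseSet} (h : ∀ C ∈ F, ∀ x ∈ C, φ x.1 = ψ x.1) :
    isAutarky φ F ↔ isAutarky ψ F :=
  forall₂_congr fun C hC => imp_congr (touches_congr (h C hC)) (satClause_congr (h C hC))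

lemma isAutarky.mono {φ : PAssign} {G F : ClauseSet} (hφ : isAutarky φ F) (hGF : G ⊆ F) :
    isAutarky φ G :=
  fun C hC => hφ C (hGF hC)

lemma varAut_subset_csVars (F : ClauseSet) : varAut F ⊆ ↑(csVars F) :=
  fun _ ⟨_, _, hvars, hv⟩ => hvars hv

noncomputable def untouched (φ : PAssign) (F : ClauseSet) : ClauseSet :=
  F.filter fun C => ¬ touches φ C

lemma eq_none_of_mem_untouched {φ : PAssign} {F : ClauseSet} {C : Clause} {x : Lit}
    (hC : C ∈ untouched φ F) (hx : x ∈ C) : φ x.1 = none := by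
  by_contra h
  exact (Finset.mem_filter.1 hC).2 ⟨x, hx, h⟩

lemma eq_none_of_mem_csVars_untouched {φ : PAssign} {F : ClauseSet} {v : Var}
    (hv : v ∈ csVars (untouched φ F)) : φ v = none := by
  obtain ⟨C, hC, hvC⟩ := Finset.mem_biUnion.1 hv
  obtain ⟨x, hx, rfl⟩ := Finset.mem_image.1 hvC
  exact eq_none_of_mem_untouched hC hx

def overlay (φ ψ : PAssign) : PAssign := fun v => (φ v).or (ψ v)

lemma overlay_of_ne_none {φ ψ : PAssign} {v : Var} (h : φ v ≠ none) : overlay φ ψ v = φ v := by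
  obtain ⟨b, hb⟩ := Option.ne_none_iff_exists'.1 h
  simp [overlay, hb]

lemma overlay_of_eq_none {φ ψ : PAssign} {v : Var} (h : φ v = none) : overlay φ ψ v = ψ v := by
  simp [overlay, h]

lemma paVars_overlay (φ ψ : PAssign) : paVars (overlay φ ψ) = paVars φ ∪ paVars ψ := by
  ext v
  simp only [paVars, overlay, Set.mem_ofPred_eq, Set.mem_union, ne_eq, Option.or_eq_none_iff]
  tauto

lemma isAutarky_overlay {φ ψ : PAssign} {F : ClauseSet} (hφ : isAutarky φ F)
    (hψ : isAutarky ψ (untouched φ F)) : isAutarky (overlay φ ψ) F := by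
  intro C hC ht
  by_cases hφC : touches φ C
  · obtain ⟨x, hx, hxφ⟩ := hφ C hC hφC
    exact ⟨x, hx, by rw [litTrue, overlay_of_ne_none (by rw [hxφ]; simp), hxφ]⟩
  · have hCu : C ∈ untouched φ F := Finset.mem_filter.2 ⟨hC, hφC⟩
    have hagree : ∀ x ∈ C, overlay φ ψ x.1 = ψ x.1 :=
      fun x hx => overlay_of_eq_none (eq_none_of_mem_untouched hCu hx)
    exact (satClause_congr hagree).2 (hψ C hCu ((touches_congr hagree).1 ht))

lemma exists_isAutarky_paVars_eq_varAut (F : ClauseSet) :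
    ∃ Φ : PAssign, isAutarky Φ F ∧ paVars Φ = varAut F := by
  have cover : ∀ S : Finset Var, ↑S ⊆ varAut F →
      ∃ Φ : PAssign, isAutarky Φ F ∧ paVars Φ ⊆ ↑(csVars F) ∧ ↑S ⊆ paVars Φ := by
    intro S
    induction S using Finset.induction_on with
    | empty =>
      exact fun _ => ⟨fun _ => none, fun _ _ ⟨_, _, hx⟩ => absurd rfl hx,
        fun _ hv => absurd rfl hv, by simp⟩
    | insert a S _ ih =>
      intro hS
      rw [Finset.coe_insert, Set.insert_subset_iff] at hS
      obtain ⟨φ, hφ, hφF, hφa⟩ := hS.1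
      obtain ⟨Φ, hΦ, hΦF, hSΦ⟩ := ih hS.2
      refine ⟨overlay φ Φ, isAutarky_overlay hφ (hΦ.mono (Finset.filter_subset _ _)), ?_, ?_⟩
      · rw [paVars_overlay]
        exact Set.union_subset hφF hΦF
      · rw [Finset.coe_insert, paVars_overlay]
        exact Set.insert_subset (Or.inl hφa) (hSΦ.trans Set.subset_union_right)
  obtain ⟨Φ, hΦ, hΦF, hmax⟩ := cover ((csVars F).filter (· ∈ varAut F)) fun v hv =>
    (Finset.mem_filter.1 hv).2
  refine ⟨Φ, hΦ, Set.Subset.antisymm (fun v hv => ⟨Φ, hΦ, hΦF, hv⟩) fun v hv => hmax ?_⟩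
  simpa using ⟨varAut_subset_csVars F hv, hv⟩

lemma isLean.eq_none {G F : ClauseSet} (hG : isLean G) (hGF : G ⊆ F) {φ : PAssign}
    (hφ : isAutarky φ F) {v : Var} (hv : v ∈ csVars G) : φ v = none := by
  let ψ : PAssign := fun w => if w ∈ csVars G then φ w else none
  have hψ : isAutarky ψ G :=
    (isAutarky_congr fun C hC x hx => if_pos (mem_csVars_of_mem hC hx)).2 (hφ.mono hGF)
  have hψG : paVars ψ ⊆ ↑(csVars G) := fun w hw => by
    by_contra h
    exact hw (if_neg h)
  simpa [ψ, hv] using hG ψ hψ hψG v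

lemma csVars_subset_leanKernel {G F : ClauseSet} (hGF : G ⊆ F) (hG : isLean G) :
    csVars G ⊆ csVars (leanKernel F) :=
  csVars_mono (Finset.le_sup (f := id) (Finset.mem_filter.2 ⟨Finset.mem_powerset.2 hGF, hG⟩))

lemma exists_isLean_of_mem_csVars_leanKernel {F : ClauseSet} {v : Var}
    (hv : v ∈ csVars (leanKernel F)) : ∃ G ⊆ F, isLean G ∧ v ∈ csVars G := by
  obtain ⟨C, hC, hvC⟩ := Finset.mem_biUnion.1 hv
  obtain ⟨G, hG, hCG⟩ := Finset.mem_sup.1 hC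
  obtain ⟨hGF, hGlean⟩ := Finset.mem_filter.1 hG
  exact ⟨G, Finset.mem_powerset.1 hGF, hGlean, Finset.mem_biUnion.2 ⟨C, hCG, hvC⟩⟩

lemma csVars_leanKernel_subset (F : ClauseSet) : csVars (leanKernel F) ⊆ csVars F := fun _ hv =>
  let ⟨_, hGF, _, hvG⟩ := exists_isLean_of_mem_csVars_leanKernel hv
  csVars_mono hGF hvG

lemma eq_none_of_isAutarky_untouched {Φ ψ : PAssign} {F : ClauseSet} (hΦ : isAutarky Φ F)
    (hmax : paVars Φ = varAut F) (hψ : isAutarky ψ (untouched Φ F))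
    (hψF : paVars ψ ⊆ ↑(csVars F)) {v : Var} (hΦv : Φ v = none) : ψ v = none := by
  by_contra hψv
  have hv : v ∈ varAut F := by
    refine ⟨overlay Φ ψ, isAutarky_overlay hΦ hψ, ?_, by rwa [overlay_of_eq_none hΦv]⟩
    rw [paVars_overlay, hmax]
    exact Set.union_subset (varAut_subset_csVars F) hψF
  rw [← hmax] at hv
  exact hv hΦv

lemma isLean_untouched {Φ : PAssign} {F : ClauseSet} (hΦ : isAutarky Φ F)
    (hmax : paVars Φ = varAut F) : isLean (untouched Φ F) := fun ψ hψ hψG v => by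
  by_cases hv : ψ v = none
  · exact hv
  · have hvG : v ∈ csVars (untouched Φ F) := hψG hv
    exact eq_none_of_isAutarky_untouched hΦ hmax hψ
      (hψG.trans (Finset.coe_subset.2 (csVars_mono (Finset.filter_subset _ _))))
      (eq_none_of_mem_csVars_untouched hvG)

lemma mem_csVars_untouched {Φ : PAssign} {F : ClauseSet} (hΦ : isAutarky Φ F)
    (hmax : paVars Φ = varAut F) {v : Var} (hvF : v ∈ csVars F) (hv : v ∉ varAut F) :
    v ∈ csVars (untouched Φ F) := by
  by_contra hvG
  let ψ : PAssign := fun w => if w = v then some true else none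
  have hψv : ∀ w, ψ w ≠ none → w = v := fun w hw => by
    by_contra h
    exact hw (if_neg h)
  -- No untouched clause contains `v`, so `ψ` is vacuously an autarky for them.
  have hψ : isAutarky ψ (untouched Φ F) := fun C hC ⟨x, hx, hxψ⟩ =>
    absurd (hψv _ hxψ ▸ mem_csVars_of_mem hC hx) hvG
  have hψF : paVars ψ ⊆ ↑(csVars F) := fun w hw => hψv w hw ▸ hvF
  have hΦv : Φ v = none := by
    by_contra h
    exact hv (hmax ▸ h)
  simpa [ψ] using eq_none_of_isAutarky_untouched hΦ hmax hψ hψF hΦv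

theorem varAut_union_leanKernel_vars (F : ClauseSet) :
    varAut F ∪ ↑(csVars (leanKernel F)) = ↑(csVars F) ∧
    varAut F ∩ ↑(csVars (leanKernel F)) = ∅ := by
  obtain ⟨Φ, hΦ, hmax⟩ := exists_isAutarky_paVars_eq_varAut F
  have hdisj : ∀ v ∈ varAut F, v ∉ csVars (leanKernel F) := by
    rintro v ⟨φ, hφ, -, hφv⟩ hv
    obtain ⟨G, hGF, hG, hvG⟩ := exists_isLean_of_mem_csVars_leanKernel hv
    exact hφv (hG.eq_none hGF hφ hvG)
  have hcover : ∀ v ∈ csVars F, v ∉ varAut F → v ∈ csVars (leanKernel F) := fun v hvF hv =>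
    csVars_subset_leanKernel (Finset.filter_subset _ _) (isLean_untouched hΦ hmax)
      (mem_csVars_untouched hΦ hmax hvF hv)
  refine ⟨Set.Subset.antisymm ?_ fun v hvF => ?_, Set.eq_empty_iff_forall_notMem.2 ?_⟩
  · exact Set.union_subset (varAut_subset_csVars F)
      (Finset.coe_subset.2 (csVars_leanKernel_subset F))
  · by_cases hv : v ∈ varAut F
    · exact Or.inl hv
    · exact Or.inr (hcover v hvF hv)
  · exact fun v ⟨hvA, hvK⟩ => hdisj v hvA hvK
end

section
/- Any two maximal autarkies φ, ψ for a clause-set F assign the same set of variables: var(φ) = var(ψ) = var_aut(F), the largest autarky-var-set. -/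
open scoped Classical

def isMaxAutarky (φ : PAssign) (F : ClauseSet) : Prop :=
  isAutarky φ F ∧ paVars φ ⊆ ↑(csVars F) ∧
  ∀ ψ : PAssign, isAutarky ψ F → paVars ψ ⊆ ↑(csVars F) →
    (∀ v b, φ v = some b → ψ v = some b) → ψ = φ

def compPA (φ ψ : PAssign) : PAssign := fun v =>
  match φ v with
  | some b => some b
  | none => ψ v

lemma compPA_autarky {φ ψ : PAssign} {F : ClauseSet}
    (hφ : isAutarky φ F) (hψ : isAutarky ψ F) : isAutarky (compPA φ ψ) F := by
  intro C hC htouch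
  by_cases h : touches φ C
  · obtain ⟨y, hy, hyt⟩ := hφ C hC h
    refine ⟨y, hy, ?_⟩
    unfold litTrue at hyt ⊢
    simp [compPA, hyt]
  · have hall : ∀ x ∈ C, φ x.1 = none := by
      intro x hx
      by_contra hne
      exact h ⟨x, hx, hne⟩
    have htψ : touches ψ C := by
      obtain ⟨x, hx, hne⟩ := htouch
      refine ⟨x, hx, ?_⟩
      have := hall x hx
      simpa [compPA, this] using hne
    obtain ⟨y, hy, hyt⟩ := hψ C hC htψ
    refine ⟨y, hy, ?_⟩
    unfold litTrue at hyt ⊢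
    simp [compPA, hall y hy, hyt]

lemma vars_sub {φ ρ : PAssign} {F : ClauseSet} (hφ : isMaxAutarky φ F)
    (hρ : isAutarky ρ F) (hρv : paVars ρ ⊆ ↑(csVars F)) :
    paVars ρ ⊆ paVars φ := by
  obtain ⟨hφa, hφv, hφm⟩ := hφ
  have hχa : isAutarky (compPA φ ρ) F := compPA_autarky hφa hρ
  have hχv : paVars (compPA φ ρ) ⊆ ↑(csVars F) := by
    intro v hv
    simp only [paVars, Set.mem_setOf_eq, compPA] at hv
    cases h : φ v with
    | some b => exact hφv (by simp [paVars, h])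
    | none => exact hρv (by simp_all [paVars])
  have hext : ∀ v b, φ v = some b → compPA φ ρ v = some b := by
    intro v b h; simp [compPA, h]
  have heq := hφm _ hχa hχv hext
  intro v hv
  simp only [paVars, Set.mem_setOf_eq] at hv ⊢
  intro hcon
  have : compPA φ ρ v = ρ v := by simp [compPA, hcon]
  rw [heq, hcon] at this
  exact hv this.symm

theorem max_autarkies_same_vars (φ ψ : PAssign) (F : ClauseSet)
    (hφ : isMaxAutarky φ F) (hψ : isMaxAutarky ψ F) :
    paVars φ = paVars ψ ∧ paVars φ = varAut F := by
  constructor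
  · exact le_antisymm (vars_sub hψ hφ.1 hφ.2.1) (vars_sub hφ hψ.1 hψ.2.1)
  · apply le_antisymm
    · intro v hv
      exact ⟨φ, hφ.1, hφ.2.1, hv⟩
    · rintro v ⟨ρ, hρa, hρv, hρne⟩
      exact vars_sub hφ hρa hρv hρne
end

section
/- If φ is an autarky for a clause-set F and C ∈ F is a clause touched by φ, then there is no tree resolution refutation of F using C as an axiom. -/
open scoped Classical

/-- `ResFrom A E` : there is a tree resolution derivation of clause `E`
whose leaves (axioms) are labelled by exactly the clauses in `A`. -/
inductive ResFrom : Set Clause → Clause → Prop where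
  | axm (C : Clause) : ResFrom {C} C
  | res {A B : Set Clause} {C D : Clause} (x : Lit)
      (h : C ∩ D.image Lit.neg = {x})
      (hC : ResFrom A C) (hD : ResFrom B D) :
      ResFrom (A ∪ B) ((C.erase x) ∪ (D.erase x.neg))

lemma neg_mem_of_resolved {Cc Dc : Clause} {x : Lit}
    (h : Cc ∩ Dc.image Lit.neg = {x}) : x.neg ∈ Dc := by
  have hx : x ∈ Cc ∩ Dc.image Lit.neg := h ▸ Finset.mem_singleton_self x
  obtain ⟨z, hz, hze⟩ := Finset.mem_image.mp (Finset.mem_inter.mp hx).2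
  have : z = x.neg := by
    have := congrArg Lit.neg hze
    simpa [Lit.neg] using this
  rwa [this] at hz

lemma not_true_both {φ : PAssign} {x : Lit} (h1 : litTrue φ x) (h2 : litTrue φ x.neg) : False := by
  simp [litTrue, Lit.neg] at h1 h2
  rw [h1] at h2
  simp at h2

lemma inv1 (φ : PAssign) (F : ClauseSet) (hφ : isAutarky φ F) :
    ∀ {A : Set Clause} {E : Clause}, ResFrom A E → A ⊆ ↑F → touches φ E → satClause φ E := by
  intro A E h
  induction h with
  | axm C => exact fun hsub ht => hφ C (hsub rfl) ht
  | @res A B Cc Dc x hx hCc hDc ihC ihD =>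
    intro hsub ht
    have hA : A ⊆ ↑F := fun a ha => hsub (Or.inl ha)
    have hB : B ⊆ ↑F := fun a ha => hsub (Or.inr ha)
    have hnegD : x.neg ∈ Dc := neg_mem_of_resolved hx
    have hxC : x ∈ Cc := (Finset.mem_inter.mp (hx ▸ Finset.mem_singleton_self x)).1
    obtain ⟨y, hy, hyne⟩ := ht
    rcases Finset.mem_union.mp hy with hy' | hy'
    · -- y ∈ Cc.erase x, so Cc touched
      have satC := ihC hA ⟨y, Finset.mem_of_mem_erase hy', hyne⟩
      obtain ⟨z, hz, hzt⟩ := satC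
      by_cases hzx : z = x
      · subst hzx
        have touchD : touches φ Dc := ⟨z.neg, hnegD, by simpa [Lit.neg, litTrue] using hzt ▸ (by simp [litTrue] at hzt; simp [hzt])⟩
        obtain ⟨w, hw, hwt⟩ := ihD hB touchD
        by_cases hwx : w = z.neg
        · exact absurd hwt (by subst hwx; intro h; exact not_true_both hzt h)
        · exact ⟨w, Finset.mem_union_right _ (Finset.mem_erase.mpr ⟨hwx, hw⟩), hwt⟩
      · exact ⟨z, Finset.mem_union_left _ (Finset.mem_erase.mpr ⟨hzx, hz⟩), hzt⟩
    · -- y ∈ Dc.erase x.neg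
      have satD := ihD hB ⟨y, Finset.mem_of_mem_erase hy', hyne⟩
      obtain ⟨w, hw, hwt⟩ := satD
      by_cases hwx : w = x.neg
      · subst hwx
        have touchC : touches φ Cc := ⟨x, hxC, by simp [litTrue, Lit.neg] at hwt; simp [hwt]⟩
        obtain ⟨z, hz, hzt⟩ := ihC hA touchC
        by_cases hzx : z = x
        · exact absurd hzt (by subst hzx; intro h; exact not_true_both h hwt)
        · exact ⟨z, Finset.mem_union_left _ (Finset.mem_erase.mpr ⟨hzx, hz⟩), hzt⟩
      · exact ⟨w, Finset.mem_union_right _ (Finset.mem_erase.mpr ⟨hwx, hw⟩), hwt⟩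

lemma inv2 (φ : PAssign) (F : ClauseSet) (hφ : isAutarky φ F) :
    ∀ {A : Set Clause} {E : Clause}, ResFrom A E → A ⊆ ↑F →
      (∃ G ∈ A, touches φ G) → satClause φ E := by
  intro A E h
  induction h with
  | axm C =>
    rintro hsub ⟨G, hG, hGt⟩
    rw [Set.mem_singleton_iff] at hG
    subst hG
    exact hφ G (hsub rfl) hGt
  | @res A B Cc Dc x hx hCc hDc ihC ihD =>
    rintro hsub ⟨G, hG, hGt⟩
    have hA : A ⊆ ↑F := fun a ha => hsub (Or.inl ha)
    have hB : B ⊆ ↑F := fun a ha => hsub (Or.inr ha)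
    have hnegD : x.neg ∈ Dc := neg_mem_of_resolved hx
    have hxC : x ∈ Cc := (Finset.mem_inter.mp (hx ▸ Finset.mem_singleton_self x)).1
    rcases hG with hG | hG
    · obtain ⟨z, hz, hzt⟩ := ihC hA ⟨G, hG, hGt⟩
      by_cases hzx : z = x
      · subst hzx
        have touchD : touches φ Dc := ⟨z.neg, hnegD, by simp [litTrue, Lit.neg] at hzt ⊢; simp [hzt]⟩
        obtain ⟨w, hw, hwt⟩ := inv1 φ F hφ hDc hB touchD
        by_cases hwx : w = z.neg
        · exact absurd hwt (by subst hwx; intro h; exact not_true_both hzt h)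
        · exact ⟨w, Finset.mem_union_right _ (Finset.mem_erase.mpr ⟨hwx, hw⟩), hwt⟩
      · exact ⟨z, Finset.mem_union_left _ (Finset.mem_erase.mpr ⟨hzx, hz⟩), hzt⟩
    · obtain ⟨w, hw, hwt⟩ := ihD hB ⟨G, hG, hGt⟩
      by_cases hwx : w = x.neg
      · subst hwx
        have touchC : touches φ Cc := ⟨x, hxC, by simp [litTrue, Lit.neg] at hwt; simp [hwt]⟩
        obtain ⟨z, hz, hzt⟩ := inv1 φ F hφ hCc hA touchC
        by_cases hzx : z = x
        · exact absurd hzt (by subst hzx; intro h; exact not_true_both h hwt)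
        · exact ⟨z, Finset.mem_union_left _ (Finset.mem_erase.mpr ⟨hzx, hz⟩), hzt⟩
      · exact ⟨w, Finset.mem_union_right _ (Finset.mem_erase.mpr ⟨hwx, hw⟩), hwt⟩

theorem touched_clause_not_in_refutation (φ : PAssign) (F : ClauseSet) (C : Clause)
    (hφ : isAutarky φ F) (hC : C ∈ F) (ht : touches φ C) :
    ∀ A : Set Clause, A ⊆ ↑F → ResFrom A (∅ : Clause) → C ∉ A := by
  intro A hsub hres hCA
  obtain ⟨x, hx, -⟩ := inv2 φ F hφ hres hsub ⟨C, hCA, ht⟩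
  exact absurd hx (Finset.notMem_empty x)
end

section
/- If there is a subset F' ⊆ F admitting a tree resolution refutation using as axioms exactly the clauses of F', then var(F') ∩ var_aut(F) = ∅, i.e., no variable occurring in F' belongs to any autarky for F over var(F). -/
open scoped Classical

lemma main_inv (φ : PAssign) {A : Set Clause} {E : Clause}
    (hres : ResFrom A E) :
    (∀ C ∈ A, touches φ C → satClause φ C) →
    ((touches φ E → satClause φ E) ∧ ((∃ C ∈ A, touches φ C) → satClause φ E)) := by
  induction hres with
  | axm C =>
      intro H
      refine ⟨fun h => H C rfl h, ?_⟩
      rintro ⟨D, hD, hT⟩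
      cases hD
      exact H C rfl hT
  | @res A B C D x hx hC hD ihC ihD =>
      intro H
      have HA : ∀ G ∈ A, touches φ G → satClause φ G := fun G h => H G (Or.inl h)
      have HB : ∀ G ∈ B, touches φ G → satClause φ G := fun G h => H G (Or.inr h)
      have hmem : x ∈ C ∩ D.image Lit.neg := hx ▸ Finset.mem_singleton_self x
      have hxC : x ∈ C := (Finset.mem_inter.mp hmem).1
      have hxD : x.neg ∈ D := by
        obtain ⟨y, hy, hyx⟩ := Finset.mem_image.mp (Finset.mem_inter.mp hmem).2
        have : y = x.neg := by subst hyx; simp [Lit.neg]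
        exact this ▸ hy
      have key1 : satClause φ C → satClause φ D →
          satClause φ (C.erase x ∪ D.erase x.neg) := by
        rintro ⟨z, hzC, hz⟩ ⟨w, hwD, hw⟩
        by_cases hzx : z = x
        · by_cases hwx : w = x.neg
          · exfalso
            subst hzx hwx
            simp [litTrue, Lit.neg] at hz hw
            rw [hz] at hw; simp at hw
          · exact ⟨w, Finset.mem_union_right _ (Finset.mem_erase.mpr ⟨hwx, hwD⟩), hw⟩
        · exact ⟨z, Finset.mem_union_left _ (Finset.mem_erase.mpr ⟨hzx, hzC⟩), hz⟩
      have keyC : satClause φ C → satClause φ (C.erase x ∪ D.erase x.neg) := by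
        rintro ⟨z, hzC, hz⟩
        by_cases hzx : z = x
        · subst hzx
          have hDt : touches φ D := ⟨z.neg, hxD, by
            show φ z.1 ≠ none
            rw [litTrue] at hz; rw [hz]; simp⟩
          exact key1 ⟨z, hzC, hz⟩ ((ihD HB).1 hDt)
        · exact ⟨z, Finset.mem_union_left _ (Finset.mem_erase.mpr ⟨hzx, hzC⟩), hz⟩
      have keyD : satClause φ D → satClause φ (C.erase x ∪ D.erase x.neg) := by
        rintro ⟨w, hwD, hw⟩
        by_cases hwx : w = x.neg
        · subst hwx
          have hCt : touches φ C := ⟨x, hxC, by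
            rw [litTrue] at hw
            show φ x.1 ≠ none
            have : (Lit.neg x).1 = x.1 := rfl
            rw [this] at hw; rw [hw]; simp⟩
          exact key1 ((ihC HA).1 hCt) ⟨x.neg, hwD, hw⟩
        · exact ⟨w, Finset.mem_union_right _ (Finset.mem_erase.mpr ⟨hwx, hwD⟩), hw⟩
      constructor
      · rintro ⟨y, hyE, hy⟩
        rcases Finset.mem_union.mp hyE with hyC | hyD
        · exact keyC ((ihC HA).1 ⟨y, Finset.mem_of_mem_erase hyC, hy⟩)
        · exact keyD ((ihD HB).1 ⟨y, Finset.mem_of_mem_erase hyD, hy⟩)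
      · rintro ⟨G, hG, hT⟩
        rcases hG with hG | hG
        · exact keyC ((ihC HA).2 ⟨G, hG, hT⟩)
        · exact keyD ((ihD HB).2 ⟨G, hG, hT⟩)

theorem refutation_vars_disjoint_varAut (F F' : ClauseSet)
    (hsub : F' ⊆ F) (href : ResFrom ↑F' (∅ : Clause)) :
    ↑(csVars F') ∩ varAut F = ∅ := by
  ext v
  simp only [Set.mem_inter_iff, Set.mem_empty_iff_false, iff_false]
  rintro ⟨hv1, φ, hAut, hsub', hvne⟩
  have hv : v ∈ csVars F' := hv1
  obtain ⟨C, hCF', hvC⟩ := Finset.mem_biUnion.mp hv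
  obtain ⟨x, hxC, hx1⟩ := Finset.mem_image.mp hvC
  have H : ∀ D ∈ (↑F' : Set Clause), touches φ D → satClause φ D :=
    fun D hD => hAut D (hsub hD)
  have hsat := (main_inv φ href H).2 ⟨C, hCF', ⟨x, hxC, by rw [hx1]; exact hvne⟩⟩
  obtain ⟨y, hy, _⟩ := hsat
  exact absurd hy (Finset.notMem_empty y)
end

section
/- Let F be a clause-set over primary variables and V a finite set of primary variables. If ψ is a satisfying assignment of the translation t_V(F), then the partial assignment t⁻¹(ψ), defined on the primary variables v with ψ(v)=1 by t⁻¹(ψ)(v) := ψ(t(v)), is an autarky for F with var(t⁻¹(ψ)) ⊆ V. -/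
open scoped Classical

/-- The autarky translation `t_V(F)`: autarky clauses, AMO clauses and indicator clauses. -/
noncomputable def transl (t : Lit → Var) (V : Finset Var) (F : ClauseSet) : ClauseSet :=
  (F.biUnion fun C => (C.filter fun x => x.1 ∈ V).image fun x =>
      insert ((t x.neg, false) : Lit)
        (((C.erase x).filter fun y => y.1 ∈ V).image fun y => ((t y, true) : Lit)))
  ∪ (V.image fun v => ({(t (v, true), false), (t (v, false), false)} : Clause))
  ∪ (V.biUnion fun v =>
      ({ ({(v, false), (t (v, true), true), (t (v, false), true)} : Clause),
         ({(t (v, true), false), (v, true)} : Clause),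
         ({(t (v, false), false), (v, true)} : Clause) } : Finset Clause))

theorem transl_solution_gives_autarky (t : Lit → Var) (P0 : Set Var)
    (hinj : Function.Injective t) (hfresh : ∀ x : Lit, t x ∉ P0)
    (F : ClauseSet) (V : Finset Var)
    (hF : ↑(csVars F) ⊆ P0) (hV : ↑V ⊆ P0)
    (ψ : PAssign)
    (hψvars : paVars ψ ⊆ ↑V ∪ t '' {x : Lit | x.1 ∈ V})
    (hsat : applyPA ψ (transl t V F) = ∅) :
    isAutarky (fun v => if ψ v = some true then ψ (t (v, true)) else none) F ∧
    paVars (fun v => if ψ v = some true then ψ (t (v, true)) else none) ⊆ ↑V := by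
  set φ : PAssign := fun v => if ψ v = some true then ψ (t (v, true)) else none with hφ
  -- every clause of the translation is satisfied by ψ
  have hsatT : ∀ C ∈ transl t V F, satClause ψ C := by
    intro C hC
    by_contra h
    have hmem : (C.filter fun x => ¬ litFalse ψ x) ∈ applyPA ψ (transl t V F) := by
      rw [applyPA, Finset.mem_image]
      exact ⟨C, Finset.mem_filter.2 ⟨hC, h⟩, rfl⟩
    rw [hsat] at hmem
    exact absurd hmem (Finset.notMem_empty _)
  have htV : ∀ x : Lit, t x ∉ V := fun x hx => hfresh x (hV hx)
  -- domain of φ is contained in V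
  have hdom : ∀ v, φ v ≠ none → v ∈ V ∧ ψ v = some true := by
    intro v hv
    simp only [hφ] at hv
    by_cases h1 : ψ v = some true
    · refine ⟨?_, h1⟩
      rw [if_pos h1] at hv
      have hv1 : v ∈ paVars ψ := by simp [paVars, h1]
      have hv2 : (t (v, true)) ∈ paVars ψ := hv
      rcases hψvars hv1 with h | ⟨x, hx, hxe⟩
      · exact h
      · rcases hψvars hv2 with h' | ⟨y, hy, hye⟩
        · exact absurd h' (htV _)
        · have hyv : y = (v, true) := hinj hye
          have : v ∈ V := by
            have := hyv ▸ hy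
            simpa using this
          subst hxe
          exact absurd (hV this) (hfresh x)
    · rw [if_neg h1] at hv
      exact absurd rfl hv
  -- AMO clauses are satisfied
  have hAMO : ∀ v ∈ V, ψ (t (v, true)) = some false ∨ ψ (t (v, false)) = some false := by
    intro v hv
    have hmem : ({(t (v, true), false), (t (v, false), false)} : Clause) ∈ transl t V F := by
      rw [transl]
      refine Finset.mem_union_left _ (Finset.mem_union_right _ ?_)
      exact Finset.mem_image.2 ⟨v, hv, rfl⟩
    obtain ⟨x, hx, hlt⟩ := hsatT _ hmem
    simp only [Finset.mem_insert, Finset.mem_singleton] at hx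
    rcases hx with rfl | rfl
    · left; simpa [litTrue] using hlt
    · right; simpa [litTrue] using hlt
  -- second/third indicator clauses are satisfied
  have hInd2 : ∀ v ∈ V, ∀ b : Bool, ψ (t (v, b)) = some false ∨ ψ v = some true := by
    intro v hv b
    have hmem : ({(t (v, b), false), (v, true)} : Clause) ∈ transl t V F := by
      rw [transl]
      refine Finset.mem_union_right _ (Finset.mem_biUnion.2 ⟨v, hv, ?_⟩)
      cases b <;> simp
    obtain ⟨x, hx, hlt⟩ := hsatT _ hmem
    simp only [Finset.mem_insert, Finset.mem_singleton] at hx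
    rcases hx with rfl | rfl
    · left; simpa [litTrue] using hlt
    · right; simpa [litTrue] using hlt
  -- first indicator clause
  have hInd1 : ∀ v ∈ V, ψ v = some true →
      ψ (t (v, true)) = some true ∨ ψ (t (v, false)) = some true := by
    intro v hv hvt
    have hmem : ({(v, false), (t (v, true), true), (t (v, false), true)} : Clause) ∈
        transl t V F := by
      rw [transl]
      refine Finset.mem_union_right _ (Finset.mem_biUnion.2 ⟨v, hv, ?_⟩)
      simp
    obtain ⟨x, hx, hlt⟩ := hsatT _ hmem
    simp only [Finset.mem_insert, Finset.mem_singleton] at hx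
    rcases hx with rfl | rfl | rfl
    · simp only [litTrue] at hlt
      rw [hvt] at hlt
      simp at hlt
    · left; simpa [litTrue] using hlt
    · right; simpa [litTrue] using hlt
  -- key lemma: ψ (t y) = true implies φ makes y true
  have hL : ∀ y : Lit, y.1 ∈ V → ψ (t y) = some true → litTrue φ y := by
    intro y hyV hyt
    obtain ⟨v, b⟩ := y
    have hvt : ψ v = some true := by
      rcases hInd2 v hyV b with h | h
      · rw [h] at hyt; simp at hyt
      · exact h
    have hφv : φ v = ψ (t (v, true)) := by simp only [hφ, if_pos hvt]
    cases b with
    | true => simp only [litTrue, hφv]; exact hyt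
    | false =>
      rcases hAMO v hyV with h | h
      · simp only [litTrue, hφv, h]
      · rw [h] at hyt; simp at hyt
  refine ⟨?_, ?_⟩
  · -- autarky
    intro C hC htouch
    obtain ⟨x, hxC, hxne⟩ := htouch
    obtain ⟨hxV, hxt⟩ := hdom x.1 hxne
    rcases hInd1 x.1 hxV hxt with h | h
    · by_cases hb : x.2 = true
      · exact ⟨x, hxC, hL x hxV (by rw [show x = (x.1, true) from Prod.ext rfl hb]; exact h)⟩
      · -- x.2 = false, so t x.neg = t (x.1, true) is true: use autarky clause
        have hb' : x.2 = false := by simpa using hb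
        have hneg : ψ (t x.neg) = some true := by
          rw [Lit.neg, hb']; exact h
        have hmem : insert ((t x.neg, false) : Lit)
            (((C.erase x).filter fun y => y.1 ∈ V).image fun y => ((t y, true) : Lit)) ∈
            transl t V F := by
          rw [transl]
          refine Finset.mem_union_left _ (Finset.mem_union_left _
            (Finset.mem_biUnion.2 ⟨C, hC, Finset.mem_image.2
              ⟨x, Finset.mem_filter.2 ⟨hxC, hxV⟩, rfl⟩⟩))
        obtain ⟨z, hz, hlt⟩ := hsatT _ hmem
        rcases Finset.mem_insert.1 hz with rfl | hz'
        · simp only [litTrue] at hlt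
          rw [hneg] at hlt; simp at hlt
        · obtain ⟨y, hy, rfl⟩ := Finset.mem_image.1 hz'
          obtain ⟨hyC, hyV⟩ := Finset.mem_filter.1 hy
          have hyt : ψ (t y) = some true := hlt
          exact ⟨y, Finset.mem_of_mem_erase hyC, hL y hyV hyt⟩
    · -- t (x.1, false) is true
      by_cases hb : x.2 = false
      · exact ⟨x, hxC, hL x hxV (by rw [show x = (x.1, false) from Prod.ext rfl hb]; exact h)⟩
      · have hb' : x.2 = true := by simpa using hb
        have hneg : ψ (t x.neg) = some true := by
          rw [Lit.neg, hb']; exact h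
        have hmem : insert ((t x.neg, false) : Lit)
            (((C.erase x).filter fun y => y.1 ∈ V).image fun y => ((t y, true) : Lit)) ∈
            transl t V F := by
          rw [transl]
          refine Finset.mem_union_left _ (Finset.mem_union_left _
            (Finset.mem_biUnion.2 ⟨C, hC, Finset.mem_image.2
              ⟨x, Finset.mem_filter.2 ⟨hxC, hxV⟩, rfl⟩⟩))
        obtain ⟨z, hz, hlt⟩ := hsatT _ hmem
        rcases Finset.mem_insert.1 hz with rfl | hz'
        · simp only [litTrue] at hlt
          rw [hneg] at hlt; simp at hlt
        · obtain ⟨y, hy, rfl⟩ := Finset.mem_image.1 hz'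
          obtain ⟨hyC, hyV⟩ := Finset.mem_filter.1 hy
          have hyt : ψ (t y) = some true := hlt
          exact ⟨y, Finset.mem_of_mem_erase hyC, hL y hyV hyt⟩
  · intro v hv
    exact (hdom v hv).1
end

section
/- Let F be a clause-set over primary variables, V a finite set of primary variables, and φ an autarky for F with var(φ) ⊆ V. Then the total assignment t_{0,V}(φ) on V ∪ t(lit(V)), defined by t_{0,V}(φ)(v) = 1 ⇔ v ∈ var(φ) and t_{0,V}(φ)(t(x)) = 1 ⇔ (var(x) ∈ var(φ) and φ(x) = 1), satisfies t_V(F). -/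
open scoped Classical

theorem autarky_gives_transl_solution (t : Lit → Var) (P0 : Set Var)
    (hinj : Function.Injective t) (hfresh : ∀ x : Lit, t x ∉ P0)
    (F : ClauseSet) (V : Finset Var)
    (hF : ↑(csVars F) ⊆ P0) (hV : ↑V ⊆ P0)
    (φ : PAssign) (hφ : isAutarky φ F) (hφV : paVars φ ⊆ ↑V)
    (ψ : PAssign)
    (hψV : ∀ v ∈ V, ψ v = some (φ v).isSome)
    (hψt : ∀ x : Lit, x.1 ∈ V →
      ψ (t x) = (if φ x.1 = some x.2 then some true else some false))
    (hψnone : ∀ w, w ∉ (↑V : Set Var) ∪ t '' {x : Lit | x.1 ∈ V} → ψ w = none) :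
    applyPA ψ (transl t V F) = ∅ := by
  have hsat : ∀ C ∈ transl t V F, satClause ψ C := by
    intro C hC
    simp only [transl, Finset.mem_union, Finset.mem_biUnion, Finset.mem_image,
      Finset.mem_filter, Finset.mem_insert, Finset.mem_singleton] at hC
    rcases hC with (⟨D, hD, x, ⟨hxD, hxV⟩, rfl⟩ | ⟨v, hvV, rfl⟩) | ⟨v, hvV, hC1 | hC2 | hC3⟩
    · -- autarky clause
      by_cases hx : φ x.1 = some (!x.2)
      · have htouch : touches φ D := ⟨x, hxD, by rw [hx]; simp⟩
        obtain ⟨y, hyD, hy⟩ := hφ D hD htouch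
        have hy' : φ y.1 = some y.2 := hy
        have hyV : y.1 ∈ V := hφV (by simp [paVars, hy'])
        have hyx : y ≠ x := by
          rintro rfl
          rw [hy'] at hx
          simp at hx
        refine ⟨(t y, true), Finset.mem_insert_of_mem
          (Finset.mem_image_of_mem _ (Finset.mem_filter.mpr
            ⟨Finset.mem_erase.mpr ⟨hyx, hyD⟩, hyV⟩)), ?_⟩
        simp [litTrue, hψt y hyV, hy']
      · refine ⟨(t x.neg, false), Finset.mem_insert_self _ _, ?_⟩
        have hnv : x.neg.1 ∈ V := hxV
        simp only [litTrue]
        rw [hψt x.neg hnv]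
        simp [Lit.neg, hx]
    · -- AMO clause
      by_cases hv : φ v = some true
      · refine ⟨(t (v, false), false), by simp, ?_⟩
        simp [litTrue, hψt (v, false) hvV, hv]
      · refine ⟨(t (v, true), false), by simp, ?_⟩
        simp [litTrue, hψt (v, true) hvV, hv]
    · subst hC1
      match hv : φ v with
      | none =>
        refine ⟨(v, false), by simp, ?_⟩
        simp [litTrue, hψV v hvV, hv]
      | some true =>
        refine ⟨(t (v, true), true), by simp, ?_⟩
        simp [litTrue, hψt (v, true) hvV, hv]
      | some false =>
        refine ⟨(t (v, false), true), by simp, ?_⟩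
        simp [litTrue, hψt (v, false) hvV, hv]
    · subst hC2
      by_cases hv : φ v = some true
      · refine ⟨(v, true), by simp, ?_⟩
        simp [litTrue, hψV v hvV, hv]
      · refine ⟨(t (v, true), false), by simp, ?_⟩
        simp [litTrue, hψt (v, true) hvV, hv]
    · subst hC3
      by_cases hv : φ v = some false
      · refine ⟨(v, true), by simp, ?_⟩
        simp [litTrue, hψV v hvV, hv]
      · refine ⟨(t (v, false), false), by simp, ?_⟩
        simp [litTrue, hψt (v, false) hvV, hv]
  rw [applyPA, Finset.image_eq_empty, Finset.filter_eq_empty_iff]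
  intro C hC
  exact not_not_intro (hsat C hC)
end

section
/- Let F be a clause-set over primary variables, P a finite set of clauses consisting only of positive literals over primary variables, and φ an autarky for F with var(φ) ⊆ var(F). Then the partial assignment t(φ) — defined on var(φ) ∪ t(lit(var(φ))) by t(φ)(v) = 1 for v ∈ var(φ), and t(φ)(t(x)) = 1 ⇔ φ(x) = 1 for literals x with var(x) ∈ var(φ) — is an autarky for t(F) ∪ P. -/
open scoped Classical

theorem autarky_lifts_to_transl_with_steering (t : Lit → Var) (P0 : Set Var)
    (hinj : Function.Injective t) (hfresh : ∀ x : Lit, t x ∉ P0)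
    (F : ClauseSet) (hF : ↑(csVars F) ⊆ P0)
    (P : ClauseSet) (hP : ∀ C ∈ P, ∀ x ∈ C, x.2 = true ∧ x.1 ∈ P0)
    (φ : PAssign) (hφ : isAutarky φ F) (hφV : paVars φ ⊆ ↑(csVars F))
    (ψ : PAssign)
    (hψ1 : ∀ v, φ v ≠ none → ψ v = some true)
    (hψ2 : ∀ x : Lit, φ x.1 ≠ none →
      ψ (t x) = (if φ x.1 = some x.2 then some true else some false))
    (hψ3 : ∀ w, w ∉ paVars φ ∪ t '' {x : Lit | x.1 ∈ paVars φ} → ψ w = none) :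
    isAutarky ψ (transl t (csVars F) F ∪ P) :=  by
  intro C hC hTouch
  have key : ∀ w, ψ w ≠ none →
      (φ w ≠ none ∧ ψ w = some true) ∨ ∃ z : Lit, w = t z ∧ φ z.1 ≠ none := by
    intro w hw
    by_cases h : w ∈ paVars φ ∪ t '' {x : Lit | x.1 ∈ paVars φ}
    · rcases h with h | ⟨z, hz, rfl⟩
      · exact Or.inl ⟨h, hψ1 w h⟩
      · exact Or.inr ⟨z, rfl, hz⟩
    · exact absurd (hψ3 w h) hw
  have keyP0 : ∀ w ∈ P0, ψ w ≠ none → φ w ≠ none ∧ ψ w = some true := by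
    intro w hw0 hw
    rcases key w hw with h | ⟨z, rfl, hz⟩
    · exact h
    · exact absurd hw0 (hfresh z)
  have keyT : ∀ z : Lit, ψ (t z) ≠ none → φ z.1 ≠ none := by
    intro z hz
    rcases key (t z) hz with ⟨h1, _⟩ | ⟨z', he, hz'⟩
    · exact absurd (hF (hφV h1)) (hfresh z)
    · rw [hinj he]; exact hz'
  rcases Finset.mem_union.mp hC with hC | hCP
  · unfold transl at hC
    rcases Finset.mem_union.mp hC with hC | hC
    · rcases Finset.mem_union.mp hC with hC | hC
      · -- autarky clauses
        rcases Finset.mem_biUnion.mp hC with ⟨C0, hC0, hCx⟩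
        rcases Finset.mem_image.mp hCx with ⟨x, hx, rfl⟩
        rcases Finset.mem_filter.mp hx with ⟨hxC0, hxV⟩
        obtain ⟨l, hl, hlne⟩ := hTouch
        have htouch0 : touches φ C0 := by
          rcases Finset.mem_insert.mp hl with rfl | hl
          · exact ⟨x, hxC0, keyT x.neg hlne⟩
          · rcases Finset.mem_image.mp hl with ⟨y, hy, rfl⟩
            rcases Finset.mem_filter.mp hy with ⟨hyC0, _⟩
            exact ⟨y, Finset.mem_of_mem_erase hyC0, keyT y hlne⟩
        obtain ⟨z, hzC0, hz⟩ := hφ C0 hC0 htouch0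
        simp only [litTrue] at hz
        have hzne : φ z.1 ≠ none := by rw [hz]; simp
        by_cases hzx : z = x
        · subst hzx
          refine ⟨(t z.neg, false), Finset.mem_insert_self _ _, ?_⟩
          have h2 := hψ2 z.neg (by simpa [Lit.neg] using hzne)
          simp only [litTrue]
          rw [h2]
          simp [Lit.neg, hz]
        · refine ⟨(t z, true), ?_, ?_⟩
          · refine Finset.mem_insert_of_mem (Finset.mem_image_of_mem _
              (Finset.mem_filter.mpr ⟨Finset.mem_erase.mpr ⟨hzx, hzC0⟩, ?_⟩))
            exact Finset.mem_biUnion.mpr ⟨C0, hC0, Finset.mem_image_of_mem _ hzC0⟩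
          · have h2 := hψ2 z hzne
            simp only [litTrue]
            rw [h2]
            simp [hz]
      · -- AMO clauses
        rcases Finset.mem_image.mp hC with ⟨v, hvV, rfl⟩
        obtain ⟨l, hl, hlne⟩ := hTouch
        have hφv : φ v ≠ none := by
          rcases Finset.mem_insert.mp hl with rfl | hl
          · exact keyT (v, true) hlne
          · rw [Finset.mem_singleton.mp hl] at hlne
            exact keyT (v, false) hlne
        obtain ⟨c, hc⟩ := Option.ne_none_iff_exists'.mp hφv
        have h2 := hψ2 (v, !c) hφv
        rw [hc] at h2
        simp at h2
        refine ⟨(t (v, !c), false), ?_, ?_⟩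
        · cases c <;> simp
        · simp [litTrue, h2]
    · -- indicator clauses
      rcases Finset.mem_biUnion.mp hC with ⟨v, hvV, hCv⟩
      have hvP0 : v ∈ P0 := hF hvV
      obtain ⟨l, hl, hlne⟩ := hTouch
      simp only [Finset.mem_insert, Finset.mem_singleton] at hCv
      rcases hCv with rfl | rfl | rfl
      · have hφv : φ v ≠ none := by
          rcases Finset.mem_insert.mp hl with rfl | hl
          · exact (keyP0 v hvP0 hlne).1
          · rcases Finset.mem_insert.mp hl with rfl | hl
            · exact keyT (v, true) hlne
            · rw [Finset.mem_singleton.mp hl] at hlne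
              exact keyT (v, false) hlne
        obtain ⟨c, hc⟩ := Option.ne_none_iff_exists'.mp hφv
        have h2 := hψ2 (v, c) hφv
        rw [hc] at h2
        simp at h2
        refine ⟨(t (v, c), true), ?_, ?_⟩
        · cases c <;> simp
        · simp [litTrue, h2]
      · refine ⟨(v, true), by simp, ?_⟩
        have hφv : φ v ≠ none := by
          rcases Finset.mem_insert.mp hl with rfl | hl
          · exact keyT (v, true) hlne
          · rw [Finset.mem_singleton.mp hl] at hlne
            exact (keyP0 v hvP0 hlne).1
        simp [litTrue, hψ1 v hφv]
      · refine ⟨(v, true), by simp, ?_⟩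
        have hφv : φ v ≠ none := by
          rcases Finset.mem_insert.mp hl with rfl | hl
          · exact keyT (v, false) hlne
          · rw [Finset.mem_singleton.mp hl] at hlne
            exact (keyP0 v hvP0 hlne).1
        simp [litTrue, hψ1 v hφv]
  · obtain ⟨l, hl, hlne⟩ := hTouch
    obtain ⟨hl2, hl1⟩ := hP C hCP l hl
    obtain ⟨_, hsat⟩ := keyP0 l.1 hl1 hlne
    exact ⟨l, hl, by simp [litTrue, hl2, hsat]⟩
end

section
/- For any clause-set F over primary variables and any finite set P of positive clauses over primary variables, the largest autarky-var-set of t(F) ∪ P is saturated (closed under the equivalence v ~ t(v) ~ t(v̄)), i.e., if ψ' is a maximal autarky of t(F) ∪ P and any one of v, t(v), t(v̄) is in var(ψ'), then all three are in the largest autarky-var-set. -/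
open scoped Classical

theorem varAut_of_transl_saturated (t : Lit → Var) (P0 : Set Var)
    (hinj : Function.Injective t) (hfresh : ∀ x : Lit, t x ∉ P0)
    (F : ClauseSet) (hF : ↑(csVars F) ⊆ P0)
    (P : ClauseSet) (hP : ∀ C ∈ P, ∀ x ∈ C, x.2 = true ∧ x.1 ∈ P0) :
    ∀ ψ : PAssign, isAutarky ψ (transl t (csVars F) F ∪ P) →
      paVars ψ ⊆ ↑(csVars (transl t (csVars F) F ∪ P)) →
      ∀ v ∈ csVars F,
        (ψ v ≠ none ∨ ψ (t (v, true)) ≠ none ∨ ψ (t (v, false)) ≠ none) →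
        v ∈ varAut (transl t (csVars F) F ∪ P) ∧
        t (v, true) ∈ varAut (transl t (csVars F) F ∪ P) ∧
        t (v, false) ∈ varAut (transl t (csVars F) F ∪ P) := by
  intro ψ hAut hsub v hv hne
  have hC1 : ({((v:Var),false),(t (v,true),true),(t (v,false),true)} : Clause)
      ∈ transl t (csVars F) F ∪ P := by
    refine Finset.mem_union_left _ (Finset.mem_union_right _ ?_)
    exact Finset.mem_biUnion.2 ⟨v, hv, by simp⟩
  have hC2 : ({(t (v,true),false),((v:Var),true)} : Clause)
      ∈ transl t (csVars F) F ∪ P := by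
    refine Finset.mem_union_left _ (Finset.mem_union_right _ ?_)
    exact Finset.mem_biUnion.2 ⟨v, hv, by simp⟩
  have hC3 : ({(t (v,false),false),((v:Var),true)} : Clause)
      ∈ transl t (csVars F) F ∪ P := by
    refine Finset.mem_union_left _ (Finset.mem_union_right _ ?_)
    exact Finset.mem_biUnion.2 ⟨v, hv, by simp⟩
  have hAMO : ({(t (v,true),false),(t (v,false),false)} : Clause)
      ∈ transl t (csVars F) F ∪ P := by
    refine Finset.mem_union_left _ (Finset.mem_union_left _ (Finset.mem_union_right _ ?_))
    exact Finset.mem_image.2 ⟨v, hv, rfl⟩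
  have key : ψ v ≠ none ∧ ψ (t (v,true)) ≠ none ∧ ψ (t (v,false)) ≠ none := by
    have ht1 : touches ψ ({((v:Var),false),(t (v,true),true),(t (v,false),true)} : Clause) := by
      rcases hne with h|h|h
      · exact ⟨(v,false), by simp, h⟩
      · exact ⟨(t (v,true),true), by simp, h⟩
      · exact ⟨(t (v,false),true), by simp, h⟩
    obtain ⟨x, hx, hlit⟩ := hAut _ hC1 ht1
    simp only [Finset.mem_insert, Finset.mem_singleton] at hx
    rcases hx with rfl|rfl|rfl
    · have hvv : ψ v = some false := hlit
      obtain ⟨y, hy, hl2⟩ := hAut _ hC2 ⟨(v,true), by simp, by simp [hvv]⟩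
      obtain ⟨z, hz, hl3⟩ := hAut _ hC3 ⟨(v,true), by simp, by simp [hvv]⟩
      simp only [Finset.mem_insert, Finset.mem_singleton] at hy hz
      refine ⟨by simp [hvv], ?_, ?_⟩
      · rcases hy with rfl|rfl
        · have : ψ (t (v,true)) = some false := hl2
          simp [this]
        · have : ψ v = some true := hl2
          simp [this] at hvv
      · rcases hz with rfl|rfl
        · have : ψ (t (v,false)) = some false := hl3
          simp [this]
        · have : ψ v = some true := hl3
          simp [this] at hvv
    · have htt : ψ (t (v,true)) = some true := hlit
      obtain ⟨y, hy, hl2⟩ := hAut _ hC2 ⟨(t (v,true),false), by simp, by simp [htt]⟩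
      obtain ⟨z, hz, hlA⟩ := hAut _ hAMO ⟨(t (v,true),false), by simp, by simp [htt]⟩
      simp only [Finset.mem_insert, Finset.mem_singleton] at hy hz
      refine ⟨?_, by simp [htt], ?_⟩
      · rcases hy with rfl|rfl
        · have : ψ (t (v,true)) = some false := hl2
          simp [this] at htt
        · have : ψ v = some true := hl2
          simp [this]
      · rcases hz with rfl|rfl
        · have : ψ (t (v,true)) = some false := hlA
          simp [this] at htt
        · have : ψ (t (v,false)) = some false := hlA
          simp [this]
    · have htf : ψ (t (v,false)) = some true := hlit
      obtain ⟨y, hy, hl3⟩ := hAut _ hC3 ⟨(t (v,false),false), by simp, by simp [htf]⟩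
      obtain ⟨z, hz, hlA⟩ := hAut _ hAMO ⟨(t (v,false),false), by simp, by simp [htf]⟩
      simp only [Finset.mem_insert, Finset.mem_singleton] at hy hz
      refine ⟨?_, ?_, by simp [htf]⟩
      · rcases hy with rfl|rfl
        · have : ψ (t (v,false)) = some false := hl3
          simp [this] at htf
        · have : ψ v = some true := hl3
          simp [this]
      · rcases hz with rfl|rfl
        · have : ψ (t (v,true)) = some false := hlA
          simp [this]
        · have : ψ (t (v,false)) = some false := hlA
          simp [this] at htf
  exact ⟨⟨ψ, hAut, hsub, key.1⟩, ⟨ψ, hAut, hsub, key.2.1⟩, ⟨ψ, hAut, hsub, key.2.2⟩⟩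
end
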